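/- For pairwise disjoint finite sets J_1, …, J_m ⊆ ℕ, the moments satisfy ⟨J_1 ∪ ⋯ ∪ J_m⟩ = Σ_{I ∈ P{1,…,m}} Π_{blocks I_l of I} [ Σ_{Q_l ∈ P_c(J_q : q ∈ I_l)} Π_{blocks Q of Q_l} ⟨Q⟩^T ], i.e., the moment factorizes over the decomposition into connected components: every partition R of ⋃_l J_l decomposes uniquely as a disjoint union of connected partitions of sub-collections of the blocks. -/

import Mathlib

open scoped BigOperators

def partitionsOf {α : Type*} [DecidableEq α] (J : Finset α) : Finset (Finset (Finset α)) :=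
  J.powerset.powerset.filter
    (fun P => ∅ ∉ P ∧ (∀ a ∈ P, ∀ b ∈ P, a ≠ b → a ∩ b = ∅) ∧ P.biUnion id = J)

/-
Group the partitions `R` of `⋃ J q` according to the connected components of the graph on the
indices in which `q` and `j` are adjacent when some block of `R` meets both `J q` and `J j`.
A set `B` of indices is closed under this adjacency exactly when `⋃_{q ∈ B} J q` is a union of
blocks of `R`, so the restriction of `R` to a component is a connected partition; conversely,
gluing connected partitions of the `⋃_{q ∈ A} J q` over the blocks `A` of a partition `I` of the
indices gives a partition whose components are `I`. This bijection turns the moment-cumulant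
expansion of `m (⋃ J q)` into the claimed sum of products.
-/

open Finset Function

variable {ι α : Type*}

lemma index_eq_of_mem {J : ι → Finset α} (hJ : Pairwise (Disjoint on J)) {x : α} {i j : ι}
    (hi : x ∈ J i) (hj : x ∈ J j) : i = j :=
  by_contra fun h => disjoint_left.mp (hJ h) hi hj

variable [DecidableEq α]

section Partitions

variable {U s : Finset α} {P S : Finset (Finset α)} {a b : Finset α} {x : α}

lemma mem_partitionsOf :
    P ∈ partitionsOf U ↔ ∅ ∉ P ∧ (∀ a ∈ P, ∀ b ∈ P, a ≠ b → a ∩ b = ∅) ∧ P.biUnion id = U := by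
  simp only [partitionsOf, mem_filter, mem_powerset, and_iff_right_iff_imp]
  rintro ⟨-, -, h⟩ b hb
  rw [mem_powerset, ← h]
  exact subset_biUnion_of_mem id hb

lemma subset_of_mem_partitionsOf (hP : P ∈ partitionsOf U) (hb : b ∈ P) : b ⊆ U :=
  (mem_partitionsOf.mp hP).2.2 ▸ subset_biUnion_of_mem id hb

lemma nonempty_of_mem_partitionsOf (hP : P ∈ partitionsOf U) (hb : b ∈ P) : b.Nonempty :=
  nonempty_iff_ne_empty.mpr fun h => (mem_partitionsOf.mp hP).1 (h ▸ hb)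

lemma exists_mem_of_mem_partitionsOf (hP : P ∈ partitionsOf U) (hx : x ∈ U) : ∃ b ∈ P, x ∈ b :=
  mem_biUnion.mp ((mem_partitionsOf.mp hP).2.2 ▸ hx)

lemma eq_of_mem_partitionsOf (hP : P ∈ partitionsOf U) (ha : a ∈ P) (hb : b ∈ P)
    (hxa : x ∈ a) (hxb : x ∈ b) : a = b := by
  by_contra hab
  have hx : x ∈ a ∩ b := mem_inter.mpr ⟨hxa, hxb⟩
  rw [(mem_partitionsOf.mp hP).2.1 a ha b hb hab] at hx
  exact notMem_empty x hx

def IsSaturated (P : Finset (Finset α)) (s : Finset α) : Prop :=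
  ∀ b ∈ P, (b ∩ s).Nonempty → b ⊆ s

lemma IsSaturated.mono {Q : Finset (Finset α)} (h : IsSaturated P s) (hQ : Q ⊆ P) :
    IsSaturated Q s :=
  fun b hb => h b (hQ hb)

lemma isSaturated_biUnion (hP : P ∈ partitionsOf U) (hS : S ⊆ P) :
    IsSaturated P (S.biUnion id) := by
  rintro b hb ⟨x, hx⟩
  obtain ⟨hxb, hxS⟩ := mem_inter.mp hx
  obtain ⟨c, hc, hxc⟩ := mem_biUnion.mp hxS
  rw [eq_of_mem_partitionsOf hP hb (hS hc) hxb hxc]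
  exact subset_biUnion_of_mem id hc

lemma biUnion_filter_subset (hP : P ∈ partitionsOf U) (hs : s ⊆ U) (h : IsSaturated P s) :
    (P.filter (· ⊆ s)).biUnion id = s := by
  refine Subset.antisymm (biUnion_subset.mpr fun b hb => (mem_filter.mp hb).2) fun x hx => ?_
  obtain ⟨b, hb, hxb⟩ := exists_mem_of_mem_partitionsOf hP (hs hx)
  exact mem_biUnion.mpr ⟨b, mem_filter.mpr ⟨hb, h b hb ⟨x, mem_inter.mpr ⟨hxb, hx⟩⟩⟩, hxb⟩

lemma filter_subset_mem_partitionsOf (hP : P ∈ partitionsOf U) (hs : s ⊆ U)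
    (h : IsSaturated P s) : P.filter (· ⊆ s) ∈ partitionsOf s := by
  obtain ⟨hne, hdisj, -⟩ := mem_partitionsOf.mp hP
  exact mem_partitionsOf.mpr ⟨fun h0 => hne (mem_filter.mp h0).1,
    fun a ha b hb => hdisj a (mem_filter.mp ha).1 b (mem_filter.mp hb).1,
    biUnion_filter_subset hP hs h⟩

end Partitions

section Blocks

variable {J : ι → Finset α}

lemma mem_of_mem_biUnion (hJ : Pairwise (Disjoint on J)) {x : α} {A : Finset ι} {i : ι}
    (hxA : x ∈ A.biUnion J) (hxi : x ∈ J i) : i ∈ A := by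
  obtain ⟨j, hj, hxj⟩ := mem_biUnion.mp hxA
  rwa [index_eq_of_mem hJ hxi hxj]

variable [DecidableEq ι]

lemma eq_of_mem_biUnion_of_mem_biUnion (hJ : Pairwise (Disjoint on J)) {U : Finset ι}
    {I : Finset (Finset ι)} (hI : I ∈ partitionsOf U) {A A' : Finset ι} (hA : A ∈ I)
    (hA' : A' ∈ I) {x : α} (hx : x ∈ A.biUnion J) (hx' : x ∈ A'.biUnion J) : A = A' := by
  obtain ⟨i, hi, hxi⟩ := mem_biUnion.mp hx
  exact eq_of_mem_partitionsOf hI hA hA' hi (mem_of_mem_biUnion hJ hx' hxi)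

def connectedPartitions (J : ι → Finset α) (A : Finset ι) : Finset (Finset (Finset α)) :=
  (partitionsOf (A.biUnion J)).filter fun Q => ¬ ∃ S ∈ Q.powerset, ∃ B ∈ A.powerset,
    S.Nonempty ∧ S ≠ Q ∧ B.Nonempty ∧ B ≠ A ∧ S.biUnion id = B.biUnion J

lemma connectedPartitions_subset (A : Finset ι) :
    connectedPartitions J A ⊆ partitionsOf (A.biUnion J) :=
  filter_subset _ _

lemma mem_partitionsOf_of_mem_pi {I : Finset (Finset ι)}
    {p : (A : Finset ι) → A ∈ I → Finset (Finset α)} (hp : p ∈ I.pi (connectedPartitions J))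
    (A : Finset ι) (hA : A ∈ I) : p A hA ∈ partitionsOf (A.biUnion J) :=
  connectedPartitions_subset A (mem_pi.mp hp A hA)

lemma mem_connectedPartitions_of_isSaturated {A : Finset ι} {Q : Finset (Finset α)}
    (hQ : Q ∈ partitionsOf (A.biUnion J))
    (h : ∀ B ⊆ A, B.Nonempty → IsSaturated Q (B.biUnion J) → B = A) :
    Q ∈ connectedPartitions J A := by
  refine mem_filter.mpr ⟨hQ, ?_⟩
  rintro ⟨S, hS, B, hB, -, -, hBne, hBA, hSB⟩
  exact hBA (h B (mem_powerset.mp hB) hBne (hSB ▸ isSaturated_biUnion hQ (mem_powerset.mp hS)))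

lemma eq_of_isSaturated_of_mem_connectedPartitions (hJ : Pairwise (Disjoint on J))
    (hJne : ∀ i, (J i).Nonempty) {A B : Finset ι} {Q : Finset (Finset α)}
    (hQ : Q ∈ connectedPartitions J A) (hBA : B ⊆ A) (hB : B.Nonempty)
    (hsat : IsSaturated Q (B.biUnion J)) : B = A := by
  obtain ⟨hQ, hconn⟩ := mem_filter.mp hQ
  by_contra hne
  have hunion := biUnion_filter_subset hQ (biUnion_subset_biUnion_of_subset_left J hBA) hsat
  refine hconn ⟨Q.filter (· ⊆ B.biUnion J), mem_powerset.mpr (filter_subset _ _),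
    B, mem_powerset.mpr hBA, ?_, fun hSQ => ?_, hB, hne, hunion⟩
  · obtain ⟨i, hi⟩ := hB
    obtain ⟨x, hx⟩ := hJne i
    obtain ⟨b, hb, -⟩ := mem_biUnion.mp (hunion ▸ mem_biUnion.mpr ⟨i, hi, hx⟩)
    exact ⟨b, hb⟩
  · obtain ⟨i, hiA, hiB⟩ := exists_of_ssubset (ssubset_of_subset_of_ne hBA hne)
    obtain ⟨x, hx⟩ := hJne i
    have hxB : x ∈ B.biUnion J := by
      rw [← hunion, hSQ, (mem_partitionsOf.mp hQ).2.2]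
      exact mem_biUnion.mpr ⟨i, hiA, hx⟩
    exact hiB (mem_of_mem_biUnion hJ hxB hx)

end Blocks

section Components

variable [Fintype ι] {J : ι → Finset α} {P : Finset (Finset α)} {i j : ι}

def Linked (J : ι → Finset α) (P : Finset (Finset α)) (i j : ι) : Prop :=
  ∃ b ∈ P, (b ∩ J i).Nonempty ∧ (b ∩ J j).Nonempty

instance : Std.Symm (Linked J P) := ⟨fun _ _ ⟨b, hb, hi, hj⟩ => ⟨b, hb, hj, hi⟩⟩

open Classical in
noncomputable def component (J : ι → Finset α) (P : Finset (Finset α)) (i : ι) : Finset ι :=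
  univ.filter (Relation.ReflTransGen (Linked J P) i)

lemma mem_component : j ∈ component J P i ↔ Relation.ReflTransGen (Linked J P) i j := by
  simp [component]

lemma self_mem_component : i ∈ component J P i :=
  mem_component.mpr Relation.ReflTransGen.refl

lemma component_eq_of_mem (h : j ∈ component J P i) : component J P j = component J P i := by
  have hij := mem_component.mp h
  ext k
  simp only [mem_component]
  exact ⟨hij.trans, (Std.Symm.symm _ _ hij).trans⟩

lemma component_subset_of_isSaturated (hJ : Pairwise (Disjoint on J)) {B : Finset ι}
    (hB : IsSaturated P (B.biUnion J)) (hi : i ∈ B) : component J P i ⊆ B := by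
  intro j hj
  rw [mem_component] at hj
  induction hj with
  | refl => exact hi
  | tail _ hstep ih =>
    obtain ⟨b, hb, hbk, x, hx⟩ := hstep
    obtain ⟨hxb, hxj⟩ := mem_inter.mp hx
    have hbB := hB b hb (hbk.mono (inter_subset_inter_left (subset_biUnion_of_mem J ih)))
    exact mem_of_mem_biUnion hJ (hbB hxb) hxj

lemma isSaturated_component (hP : ∀ b ∈ P, b ⊆ univ.biUnion J) (i : ι) :
    IsSaturated P ((component J P i).biUnion J) := by
  rintro b hb ⟨x, hx⟩ y hy
  obtain ⟨hxb, hxC⟩ := mem_inter.mp hx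
  obtain ⟨k, hk, hxk⟩ := mem_biUnion.mp hxC
  obtain ⟨r, -, hyr⟩ := mem_biUnion.mp (hP b hb hy)
  have hlink : Linked J P k r :=
    ⟨b, hb, ⟨x, mem_inter.mpr ⟨hxb, hxk⟩⟩, ⟨y, mem_inter.mpr ⟨hy, hyr⟩⟩⟩
  exact mem_biUnion.mpr ⟨r, mem_component.mpr ((mem_component.mp hk).tail hlink), hyr⟩

variable [DecidableEq ι]

noncomputable def components (J : ι → Finset α) (P : Finset (Finset α)) : Finset (Finset ι) :=
  univ.image (component J P)

lemma components_mem_partitionsOf (J : ι → Finset α) (P : Finset (Finset α)) :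
    components J P ∈ partitionsOf (univ : Finset ι) := by
  refine mem_partitionsOf.mpr ⟨fun h => ?_, ?_, eq_univ_of_forall fun i => ?_⟩
  · obtain ⟨i, -, hi⟩ := mem_image.mp h
    exact notMem_empty i (hi ▸ self_mem_component)
  · simp only [components, mem_image, mem_univ, true_and]
    rintro _ ⟨i, rfl⟩ _ ⟨j, rfl⟩ hij
    by_contra h
    obtain ⟨k, hk⟩ := nonempty_iff_ne_empty.mpr h
    obtain ⟨hki, hkj⟩ := mem_inter.mp hk
    exact hij ((component_eq_of_mem hki).symm.trans (component_eq_of_mem hkj))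
  · exact mem_biUnion.mpr ⟨_, mem_image_of_mem _ (mem_univ i), self_mem_component⟩

end Components

def glue (I : Finset (Finset ι)) (p : (A : Finset ι) → A ∈ I → Finset (Finset α)) :
    Finset (Finset α) :=
  I.attach.biUnion fun A => p A.1 A.2

lemma mem_glue {I : Finset (Finset ι)} {p : (A : Finset ι) → A ∈ I → Finset (Finset α)}
    {b : Finset α} : b ∈ glue I p ↔ ∃ A, ∃ hA : A ∈ I, b ∈ p A hA := by
  simp [glue]

section Decomposition

variable [Fintype ι] [DecidableEq ι] {J : ι → Finset α} {P : Finset (Finset α)}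

lemma filter_subset_mem_connectedPartitions (hJ : Pairwise (Disjoint on J))
    (hP : P ∈ partitionsOf (univ.biUnion J)) {C : Finset ι} (hC : C ∈ components J P) :
    P.filter (· ⊆ C.biUnion J) ∈ connectedPartitions J C := by
  obtain ⟨i, -, rfl⟩ := mem_image.mp hC
  have hsat := isSaturated_component (fun b hb => subset_of_mem_partitionsOf hP hb) i
  refine mem_connectedPartitions_of_isSaturated (filter_subset_mem_partitionsOf hP
    (biUnion_subset_biUnion_of_subset_left J (subset_univ _)) hsat) fun B hBC ⟨j, hj⟩ hB => ?_
  have hBP : IsSaturated P (B.biUnion J) := fun b hb hbB =>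
    hB b (mem_filter.mpr ⟨hb, hsat b hb (hbB.mono (inter_subset_inter_left
      (biUnion_subset_biUnion_of_subset_left J hBC)))⟩) hbB
  exact hBC.antisymm (component_eq_of_mem (hBC hj) ▸ component_subset_of_isSaturated hJ hBP hj)

lemma glue_filter_subset (hP : P ∈ partitionsOf (univ.biUnion J)) :
    glue (components J P) (fun C _ => P.filter (· ⊆ C.biUnion J)) = P := by
  ext b
  refine mem_glue.trans ⟨fun ⟨_, _, hb⟩ => (mem_filter.mp hb).1, fun hb => ?_⟩
  obtain ⟨x, hx⟩ := nonempty_of_mem_partitionsOf hP hb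
  obtain ⟨i, -, hxi⟩ := mem_biUnion.mp (subset_of_mem_partitionsOf hP hb hx)
  have hbC := isSaturated_component (fun b hb => subset_of_mem_partitionsOf hP hb) i b hb
    ⟨x, mem_inter.mpr ⟨hx, mem_biUnion.mpr ⟨i, self_mem_component, hxi⟩⟩⟩
  exact ⟨component J P i, mem_image_of_mem _ (mem_univ i), mem_filter.mpr ⟨hb, hbC⟩⟩

variable {I : Finset (Finset ι)} {p : (A : Finset ι) → A ∈ I → Finset (Finset α)}

lemma glue_mem_partitionsOf (hJ : Pairwise (Disjoint on J)) (hI : I ∈ partitionsOf univ)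
    (hp : ∀ A (hA : A ∈ I), p A hA ∈ partitionsOf (A.biUnion J)) :
    glue I p ∈ partitionsOf (univ.biUnion J) := by
  refine mem_partitionsOf.mpr ⟨fun h => ?_, fun a ha b hb hab => ?_, ?_⟩
  · obtain ⟨A, hA, h⟩ := mem_glue.mp h
    exact (mem_partitionsOf.mp (hp A hA)).1 h
  · obtain ⟨A, hA, ha⟩ := mem_glue.mp ha
    obtain ⟨A', hA', hb⟩ := mem_glue.mp hb
    by_cases hAA : A = A'
    · subst hAA
      exact (mem_partitionsOf.mp (hp A hA)).2.1 a ha b hb hab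
    · refine eq_empty_iff_forall_notMem.mpr fun x hx => hAA ?_
      obtain ⟨hxa, hxb⟩ := mem_inter.mp hx
      exact eq_of_mem_biUnion_of_mem_biUnion hJ hI hA hA'
        (subset_of_mem_partitionsOf (hp A hA) ha hxa)
        (subset_of_mem_partitionsOf (hp A' hA') hb hxb)
  · ext x
    simp only [mem_biUnion, mem_glue, id, mem_univ, true_and]
    constructor
    · rintro ⟨b, ⟨A, hA, hb⟩, hxb⟩
      obtain ⟨i, -, hxi⟩ := mem_biUnion.mp (subset_of_mem_partitionsOf (hp A hA) hb hxb)
      exact ⟨i, hxi⟩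
    · rintro ⟨i, hxi⟩
      obtain ⟨A, hA, hiA⟩ := exists_mem_of_mem_partitionsOf hI (mem_univ i)
      obtain ⟨b, hb, hxb⟩ :=
        exists_mem_of_mem_partitionsOf (hp A hA) (mem_biUnion.mpr ⟨i, hiA, hxi⟩)
      exact ⟨b, ⟨A, hA, hb⟩, hxb⟩

lemma isSaturated_glue (hJ : Pairwise (Disjoint on J)) (hI : I ∈ partitionsOf univ)
    (hp : ∀ A (hA : A ∈ I), p A hA ∈ partitionsOf (A.biUnion J)) {A : Finset ι} (hA : A ∈ I) :
    IsSaturated (glue I p) (A.biUnion J) := by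
  rintro b hb ⟨x, hx⟩
  obtain ⟨A', hA', hb⟩ := mem_glue.mp hb
  obtain ⟨hxb, hxA⟩ := mem_inter.mp hx
  have hbA' := subset_of_mem_partitionsOf (hp A' hA') hb
  rwa [← eq_of_mem_biUnion_of_mem_biUnion hJ hI hA' hA (hbA' hxb) hxA]

lemma filter_subset_glue (hJ : Pairwise (Disjoint on J)) (hI : I ∈ partitionsOf univ)
    (hp : ∀ A (hA : A ∈ I), p A hA ∈ partitionsOf (A.biUnion J)) {A : Finset ι} (hA : A ∈ I) :
    (glue I p).filter (· ⊆ A.biUnion J) = p A hA := by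
  ext b
  rw [mem_filter, mem_glue]
  refine ⟨fun ⟨⟨A', hA', hb⟩, hbA⟩ => ?_,
    fun hb => ⟨⟨A, hA, hb⟩, subset_of_mem_partitionsOf (hp A hA) hb⟩⟩
  obtain ⟨x, hx⟩ := nonempty_of_mem_partitionsOf (hp A' hA') hb
  obtain rfl := eq_of_mem_biUnion_of_mem_biUnion hJ hI hA hA' (hbA hx)
    (subset_of_mem_partitionsOf (hp A' hA') hb hx)
  exact hb

lemma prod_glue {R : Type*} [CommMonoid R] (hJ : Pairwise (Disjoint on J))
    (hI : I ∈ partitionsOf univ) (hp : ∀ A (hA : A ∈ I), p A hA ∈ partitionsOf (A.biUnion J))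
    (f : Finset α → R) : ∏ b ∈ glue I p, f b = ∏ A ∈ I.attach, ∏ b ∈ p A.1 A.2, f b := by
  refine prod_biUnion fun A _ A' _ hAA => disjoint_left.mpr fun b hb hb' => hAA ?_
  obtain ⟨x, hx⟩ := nonempty_of_mem_partitionsOf (hp A.1 A.2) hb
  exact Subtype.ext (eq_of_mem_biUnion_of_mem_biUnion hJ hI A.2 A'.2
    (subset_of_mem_partitionsOf (hp A.1 A.2) hb hx)
    (subset_of_mem_partitionsOf (hp A'.1 A'.2) hb' hx))

lemma component_glue (hJ : Pairwise (Disjoint on J)) (hJne : ∀ i, (J i).Nonempty)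
    (hI : I ∈ partitionsOf univ) (hp : ∀ A (hA : A ∈ I), p A hA ∈ connectedPartitions J A)
    {A : Finset ι} (hA : A ∈ I) {i : ι} (hi : i ∈ A) : component J (glue I p) i = A := by
  have hp' A hA := connectedPartitions_subset A (hp A hA)
  have hsat := isSaturated_component
    (fun b hb => subset_of_mem_partitionsOf (glue_mem_partitionsOf hJ hI hp') hb) i
  exact eq_of_isSaturated_of_mem_connectedPartitions hJ hJne (hp A hA)
    (component_subset_of_isSaturated hJ (isSaturated_glue hJ hI hp' hA) hi)
    ⟨i, self_mem_component⟩ (hsat.mono fun b hb => mem_glue.mpr ⟨A, hA, hb⟩)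

lemma components_glue (hJ : Pairwise (Disjoint on J)) (hJne : ∀ i, (J i).Nonempty)
    (hI : I ∈ partitionsOf univ) (hp : ∀ A (hA : A ∈ I), p A hA ∈ connectedPartitions J A) :
    components J (glue I p) = I := by
  ext A
  refine mem_image.trans ⟨?_, fun hA => ?_⟩
  · rintro ⟨i, -, rfl⟩
    obtain ⟨A, hA, hi⟩ := exists_mem_of_mem_partitionsOf hI (mem_univ i)
    rwa [component_glue hJ hJne hI hp hA hi]
  · obtain ⟨i, hi⟩ := nonempty_of_mem_partitionsOf hI hA
    exact ⟨i, mem_univ i, component_glue hJ hJne hI hp hA hi⟩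

theorem sum_filter_components_eq_prod {R : Type*} [CommSemiring R]
    (hJ : Pairwise (Disjoint on J)) (hJne : ∀ i, (J i).Nonempty) (hI : I ∈ partitionsOf univ)
    (f : Finset α → R) :
    ∑ P ∈ (partitionsOf (univ.biUnion J)).filter (components J · = I), ∏ b ∈ P, f b =
      ∏ A ∈ I, ∑ Q ∈ connectedPartitions J A, ∏ b ∈ Q, f b := by
  rw [prod_sum]
  symm
  refine sum_nbij' (glue I) (fun P A _ => P.filter (· ⊆ A.biUnion J)) (fun p hp => ?_)
    (fun P hP => ?_) (fun p hp => ?_) (fun P hP => ?_) (fun p hp => ?_)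
  · exact mem_filter.mpr ⟨glue_mem_partitionsOf hJ hI (mem_partitionsOf_of_mem_pi hp),
      components_glue hJ hJne hI (mem_pi.mp hp)⟩
  · obtain ⟨hPU, rfl⟩ := mem_filter.mp hP
    exact mem_pi.mpr fun C hC => filter_subset_mem_connectedPartitions hJ hPU hC
  · funext A hA
    exact filter_subset_glue hJ hI (mem_partitionsOf_of_mem_pi hp) hA
  · obtain ⟨hPU, rfl⟩ := mem_filter.mp hP
    exact glue_filter_subset hPU
  · exact (prod_glue hJ hI (mem_partitionsOf_of_mem_pi hp) f).symm

end Decomposition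

/-- The moment of `J₁ ∪ ⋯ ∪ Jₘ` factorizes over connected components: it is the
sum over partitions `I` of the index set `{1,…,m}` of the products, over the
blocks `A` of `I`, of the sums over partitions of `⋃_{q ∈ A} J q` connected
with respect to the blocks `{J q}_{q ∈ A}` of products of truncated moments. -/
theorem moment_factorization_over_connected (mm : ℕ) (hmm : 0 < mm)
    (J : Fin mm → Finset ℕ) (hJne : ∀ l, (J l).Nonempty)
    (hdisj : ∀ l l', l ≠ l' → J l ∩ J l' = ∅)
    (m T : Finset ℕ → ℝ)
    (hT : ∀ S : Finset ℕ, S.Nonempty → m S = ∑ P ∈ partitionsOf S, ∏ b ∈ P, T b) :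
    m (Finset.univ.biUnion J) =
      ∑ I ∈ partitionsOf (Finset.univ : Finset (Fin mm)),
        ∏ A ∈ I,
          ∑ Q ∈ (partitionsOf (A.biUnion J)).filter
              (fun Q => ¬ ∃ S ∈ Q.powerset, ∃ B ∈ A.powerset,
                S.Nonempty ∧ S ≠ Q ∧ B.Nonempty ∧ B ≠ A ∧ S.biUnion id = B.biUnion J),
            ∏ b ∈ Q, T b := by
  have hJ : Pairwise (Disjoint on J) := fun l l' h => disjoint_iff_inter_eq_empty.mpr (hdisj l l' h)
  have hU : (univ.biUnion J).Nonempty := (hJne ⟨0, hmm⟩).mono (subset_biUnion_of_mem J (mem_univ _))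
  rw [hT _ hU, ← sum_fiberwise_of_maps_to fun P _ => components_mem_partitionsOf J P]
  exact sum_congr rfl fun I hI => sum_filter_components_eq_prod hJ hJne hI T
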